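/- Let A and B be real symmetric positive definite d×d matrices and let ℝ^d = V₁ ⊕ … ⊕ V_r be the orthogonal decomposition into eigenspaces of A with pairwise distinct eigenvalues. Define Σ* = Σ_{i=1}^r λ_i · P_{V_i}, where P_{V_i} is the orthogonal projection onto V_i and λ_i = √( tr(B|_{V_i}) / tr(B⁻¹|_{V_i}) ). Then Σ* is symmetric positive definite, aligned with A, and attains the infimum defining the misalignment: (1/2)·tr((Σ*)⁻¹B + B⁻¹Σ*) − d = M(A, B). -/

import Mathlib

open Matrix

/-- Eigenspace of a `d × d` real matrix `A` (acting on Euclidean space) for the (potential)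
eigenvalue `μ`. -/
noncomputable def eigSp {d : ℕ} (A : Matrix (Fin d) (Fin d) ℝ) (μ : ℝ) :
    Submodule ℝ (EuclideanSpace ℝ (Fin d)) :=
  Module.End.eigenspace (Matrix.toEuclideanLin A) μ

/-- `A` is aligned with `B` if every eigenspace of `B` is contained in an eigenspace of `A`. -/
def IsAligned {d : ℕ} (A B : Matrix (Fin d) (Fin d) ℝ) : Prop :=
  ∀ μ : ℝ, ∃ ν : ℝ, eigSp B μ ≤ eigSp A ν

/-- The misalignment `M(A, B)`: the infimum, over symmetric positive definite matrices `S`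
aligned with `A`, of `(1/2) · tr(S⁻¹ B + B⁻¹ S) − d`. -/
noncomputable def misalignment {d : ℕ} (A B : Matrix (Fin d) (Fin d) ℝ) : ℝ :=
  sInf {m : ℝ | ∃ S : Matrix (Fin d) (Fin d) ℝ,
    S.PosDef ∧ IsAligned S A ∧ m = (1 / 2) * (S⁻¹ * B + B⁻¹ * S).trace - d}

/-- `tr(B|_V)`: the trace of the linear map `V → V`, `v ↦ pr_V (B v)`, where `pr_V` is the
orthogonal projection onto the subspace `V`. -/
noncomputable def restrictTrace {d : ℕ} (B : Matrix (Fin d) (Fin d) ℝ)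
    (V : Submodule ℝ (EuclideanSpace ℝ (Fin d))) : ℝ :=
  LinearMap.trace ℝ V
    (((Submodule.orthogonalProjection V).toLinearMap.comp (Matrix.toEuclideanLin B)).comp V.subtype)

/-- The matrix of the orthogonal projection of `ℝ^d` onto the subspace `V`. -/
noncomputable def projMatrix {d : ℕ} (V : Submodule ℝ (EuclideanSpace ℝ (Fin d))) :
    Matrix (Fin d) (Fin d) ℝ :=
  Matrix.toEuclideanLin.symm (V.subtype.comp (Submodule.orthogonalProjection V).toLinearMap)

/-!
The eigenspaces `Vᵢ` of `A` are pairwise orthogonal and span `ℝ^d`, so a positive definite `S`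
aligned with `A` acts on each `Vᵢ` by a scalar `κᵢ > 0`, i.e. `S = ∑ κᵢ • P_{Vᵢ}`, and then
`S⁻¹ = ∑ κᵢ⁻¹ • P_{Vᵢ}`. The objective therefore splits as
`½ ∑ᵢ (κᵢ⁻¹ tr(B|_{Vᵢ}) + κᵢ tr(B⁻¹|_{Vᵢ})) - d`, and by AM–GM each summand is minimised
independently at `κᵢ = λᵢ`. Conversely `Σ*` is of this form, hence admissible.
-/

open scoped InnerProductSpace

theorem Matrix.trace_toEuclideanLin {n : Type*} [Fintype n] [DecidableEq n] (M : Matrix n n ℝ) :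
    LinearMap.trace ℝ _ (toEuclideanLin M) = M.trace :=
  M.trace_toLin_eq (PiLp.basisFun 2 ℝ n)

theorem Matrix.PosDef.inner_toEuclideanLin_self_pos {n : Type*} [Fintype n] [DecidableEq n]
    {S : Matrix n n ℝ} (hS : S.PosDef) {v : EuclideanSpace ℝ n} (hv : v ≠ 0) :
    0 < ⟪v, toEuclideanLin S v⟫_ℝ := by
  have := hS.dotProduct_mulVec_pos (x := WithLp.ofLp v) (by simpa using hv)
  rwa [← coe_toEuclideanCLM_eq_toEuclideanLin, ContinuousLinearMap.coe_coe, inner_toEuclideanCLM]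

theorem Matrix.PosDef.pos_of_toEuclideanLin_apply_eq_smul {n : Type*} [Fintype n] [DecidableEq n]
    {S : Matrix n n ℝ} (hS : S.PosDef) {v : EuclideanSpace ℝ n} (hv : v ≠ 0) {ν : ℝ}
    (hSv : toEuclideanLin S v = ν • v) : 0 < ν := by
  have := hS.inner_toEuclideanLin_self_pos hv
  rw [hSv, real_inner_smul_right] at this
  exact pos_of_mul_pos_left this real_inner_self_nonneg

theorem Matrix.eq_of_toEuclideanLin_eqOn {n ι : Type*} [Fintype n] [DecidableEq n]
    {V : ι → Submodule ℝ (EuclideanSpace ℝ n)} (hsup : ⨆ i, V i = ⊤) {M N : Matrix n n ℝ}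
    (h : ∀ i, Set.EqOn (toEuclideanLin M) (toEuclideanLin N) (V i)) : M = N := by
  refine toEuclideanLin.injective (LinearMap.ext_on (s := ⋃ i, (V i : Set _)) ?_ ?_)
  · rw [← Submodule.iSup_eq_span, hsup]
  · intro v hv
    obtain ⟨i, hvi⟩ := Set.mem_iUnion.1 hv
    exact h i hvi

theorem Module.End.eigenspace_eq_bot_of_iSup_eigenspace_eq_top {K M ι : Type*} [Field K]
    [AddCommGroup M] [Module K M] {f : Module.End K M} {μ : ι → K}
    (h : ⨆ i, f.eigenspace (μ i) = ⊤) {ν : K} (hν : ∀ i, μ i ≠ ν) : f.eigenspace ν = ⊥ := by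
  refine (f.eigenspaces_iSupIndep ν).eq_bot_of_le (le_top.trans (h.ge.trans (iSup_le fun i => ?_)))
  exact le_iSup₂_of_le (f := fun ν' (_ : ν' ≠ ν) => f.eigenspace ν') (μ i) (hν i) le_rfl

theorem sqrt_div_inv_mul_add_mul_le {b c x : ℝ} (hb : 0 < b) (hc : 0 < c) (hx : 0 < x) :
    (√(b / c))⁻¹ * b + √(b / c) * c ≤ x⁻¹ * b + x * c := by
  set s := √(b / c)
  have hs : 0 < s := Real.sqrt_pos.2 (div_pos hb hc)
  have hb' : b = s ^ 2 * c := by rw [Real.sq_sqrt (div_pos hb hc).le]; field_simp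
  rw [hb']
  field_simp
  nlinarith [sq_nonneg (x - s), mul_pos hs hc, mul_pos hx hc]

section Euclidean

variable {d : ℕ}

theorem toEuclideanLin_projMatrix (V : Submodule ℝ (EuclideanSpace ℝ (Fin d))) :
    toEuclideanLin (projMatrix V) = (V.starProjection : EuclideanSpace ℝ (Fin d) →ₗ[ℝ] _) :=
  LinearEquiv.apply_symm_apply _ _

theorem projMatrix_posSemidef (V : Submodule ℝ (EuclideanSpace ℝ (Fin d))) :
    (projMatrix V).PosSemidef := by
  rw [← Matrix.isPositive_toEuclideanLin_iff, toEuclideanLin_projMatrix]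
  exact ContinuousLinearMap.IsPositive.of_isStarProjection isStarProjection_starProjection

theorem restrictTrace_eq_trace_projMatrix_mul (B : Matrix (Fin d) (Fin d) ℝ)
    (V : Submodule ℝ (EuclideanSpace ℝ (Fin d))) :
    restrictTrace B V = (projMatrix V * B).trace := by
  rw [restrictTrace, LinearMap.trace_comp_comm', ← LinearMap.comp_assoc,
    ← Matrix.trace_toEuclideanLin, Matrix.toLpLin_mul_same, toEuclideanLin_projMatrix]
  rfl

theorem restrictTrace_pos {B : Matrix (Fin d) (Fin d) ℝ} (hB : B.PosDef)
    {V : Submodule ℝ (EuclideanSpace ℝ (Fin d))} (hV : V ≠ ⊥) : 0 < restrictTrace B V := by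
  have : Nontrivial V := Submodule.nontrivial_iff_ne_bot.2 hV
  let b := stdOrthonormalBasis ℝ V
  have : Nonempty (Fin (Module.finrank ℝ V)) := Fin.pos_iff_nonempty.1 Module.finrank_pos
  rw [restrictTrace, LinearMap.trace_eq_sum_inner _ b]
  refine Finset.sum_pos (fun i _ => ?_) Finset.univ_nonempty
  simp only [LinearMap.comp_apply, Submodule.subtype_apply, ContinuousLinearMap.coe_coe,
    Submodule.inner_orthogonalProjectionOnto_eq_of_mem_left]
  exact hB.inner_toEuclideanLin_self_pos (by simpa using b.orthonormal.ne_zero i)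

theorem isAligned_of_iSup_eigSp_eq_top {ι : Type*} {A S : Matrix (Fin d) (Fin d) ℝ} {μ : ι → ℝ}
    (hsup : ⨆ i, eigSp A (μ i) = ⊤) (h : ∀ i, ∃ κ, eigSp A (μ i) ≤ eigSp S κ) :
    IsAligned S A := by
  intro ν
  by_cases hν : ∃ i, μ i = ν
  · obtain ⟨i, rfl⟩ := hν
    exact h i
  · refine ⟨0, ?_⟩
    rw [eigSp, Module.End.eigenspace_eq_bot_of_iSup_eigenspace_eq_top hsup (not_exists.1 hν)]
    exact bot_le

variable {ι : Type*} [Fintype ι] {V : ι → Submodule ℝ (EuclideanSpace ℝ (Fin d))}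

theorem toEuclideanLin_sum_smul_projMatrix_apply_of_mem
    (hV : OrthogonalFamily ℝ (fun i => V i) fun i => (V i).subtypeₗᵢ) (ν : ι → ℝ) {j : ι}
    {v : EuclideanSpace ℝ (Fin d)} (hv : v ∈ V j) :
    toEuclideanLin (∑ i, ν i • projMatrix (V i)) v = ν j • v := by
  simp only [map_sum, map_smul, LinearMap.sum_apply, LinearMap.smul_apply,
    toEuclideanLin_projMatrix, ContinuousLinearMap.coe_coe]
  rw [Finset.sum_eq_single_of_mem j (Finset.mem_univ j), Submodule.starProjection_eq_self_iff.2 hv]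
  intro i _ hij
  rw [(Submodule.starProjection_apply_eq_zero_iff _).2 (hV.isOrtho hij.symm hv), smul_zero]

variable (hV : OrthogonalFamily ℝ (fun i => V i) fun i => (V i).subtypeₗᵢ) (hsup : ⨆ i, V i = ⊤)
include hV hsup

theorem eq_sum_smul_projMatrix {S : Matrix (Fin d) (Fin d) ℝ} {ν : ι → ℝ}
    (hS : ∀ i, ∀ v ∈ V i, toEuclideanLin S v = ν i • v) : S = ∑ i, ν i • projMatrix (V i) :=
  Matrix.eq_of_toEuclideanLin_eqOn hsup fun i v hv => by
    rw [hS i v hv, toEuclideanLin_sum_smul_projMatrix_apply_of_mem hV ν hv]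

theorem sum_smul_projMatrix_mul_sum_inv_smul_projMatrix {ν : ι → ℝ} (hν : ∀ i, ν i ≠ 0) :
    (∑ i, ν i • projMatrix (V i)) * (∑ i, (ν i)⁻¹ • projMatrix (V i)) = 1 :=
  Matrix.eq_of_toEuclideanLin_eqOn hsup fun i v hv => by
    rw [Matrix.toLpLin_mul_same, LinearMap.comp_apply,
      toEuclideanLin_sum_smul_projMatrix_apply_of_mem hV _ hv, map_smul,
      toEuclideanLin_sum_smul_projMatrix_apply_of_mem hV _ hv, smul_smul, inv_mul_cancel₀ (hν i),
      one_smul, Matrix.toLpLin_one, LinearMap.id_apply]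

theorem inv_sum_smul_projMatrix {ν : ι → ℝ} (hν : ∀ i, ν i ≠ 0) :
    (∑ i, ν i • projMatrix (V i))⁻¹ = ∑ i, (ν i)⁻¹ • projMatrix (V i) :=
  Matrix.inv_eq_right_inv (sum_smul_projMatrix_mul_sum_inv_smul_projMatrix hV hsup hν)

theorem posDef_sum_smul_projMatrix {ν : ι → ℝ} (hν : ∀ i, 0 < ν i) :
    (∑ i, ν i • projMatrix (V i)).PosDef := by
  have hpsd : (∑ i, ν i • projMatrix (V i)).PosSemidef :=
    Matrix.posSemidef_sum _ fun i _ => (projMatrix_posSemidef (V i)).smul (hν i).le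
  refine hpsd.posDef_iff_isUnit.2 ((Matrix.isUnit_iff_isUnit_det _).2 ?_)
  exact Matrix.isUnit_det_of_right_inverse
    (sum_smul_projMatrix_mul_sum_inv_smul_projMatrix hV hsup fun i => (hν i).ne')

theorem exists_pos_eq_sum_smul_projMatrix (hne : ∀ i, V i ≠ ⊥) {S : Matrix (Fin d) (Fin d) ℝ}
    (hS : S.PosDef) (hSV : ∀ i, ∃ κ, V i ≤ eigSp S κ) :
    ∃ κ : ι → ℝ, (∀ i, 0 < κ i) ∧ S = ∑ i, κ i • projMatrix (V i) := by
  choose κ hκ using hSV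
  have hSκ : ∀ i, ∀ v ∈ V i, toEuclideanLin S v = κ i • v := fun i v hv =>
    Module.End.mem_eigenspace_iff.1 (hκ i hv)
  refine ⟨κ, fun i => ?_, eq_sum_smul_projMatrix hV hsup hSκ⟩
  obtain ⟨v, hv, hv0⟩ := Submodule.exists_mem_ne_zero_of_ne_bot (hne i)
  exact hS.pos_of_toEuclideanLin_apply_eq_smul hv0 (hSκ i v hv)

theorem trace_inv_mul_add_inv_mul_sum_smul_projMatrix (B : Matrix (Fin d) (Fin d) ℝ)
    {ν : ι → ℝ} (hν : ∀ i, ν i ≠ 0) :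
    ((∑ i, ν i • projMatrix (V i))⁻¹ * B + B⁻¹ * ∑ i, ν i • projMatrix (V i)).trace =
      ∑ i, ((ν i)⁻¹ * restrictTrace B (V i) + ν i * restrictTrace B⁻¹ (V i)) := by
  rw [inv_sum_smul_projMatrix hV hsup hν, Matrix.trace_add, Matrix.trace_mul_comm B⁻¹,
    Finset.sum_mul, Finset.sum_mul, Matrix.trace_sum, Matrix.trace_sum, ← Finset.sum_add_distrib]
  simp only [smul_mul_assoc, Matrix.trace_smul, smul_eq_mul, restrictTrace_eq_trace_projMatrix_mul]

end Euclidean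

/-- Let `ℝ^d = V₁ ⊕ … ⊕ V_r` be the orthogonal decomposition into eigenspaces
of the positive definite matrix `A` with pairwise distinct eigenvalues, and let
`Σ* = ∑ i, λᵢ • P_{Vᵢ}` with `λᵢ = √( tr(B|_{Vᵢ}) / tr(B⁻¹|_{Vᵢ}) )`. Then `Σ*` is symmetric
positive definite, aligned with `A`, and attains the infimum defining `M(A, B)`. -/
theorem misalignment_infimum_attained {d : ℕ}
    (A B : Matrix (Fin d) (Fin d) ℝ) (hA : A.PosDef) (hB : B.PosDef)
    (r : ℕ) (V : Fin r → Submodule ℝ (EuclideanSpace ℝ (Fin d))) (μ : Fin r → ℝ)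
    (hμ : Function.Injective μ)
    (hV : ∀ i, V i = eigSp A (μ i)) (hne : ∀ i, V i ≠ ⊥)
    (hsup : (⨆ i, V i) = ⊤)
    (Sstar : Matrix (Fin d) (Fin d) ℝ)
    (hSstar : Sstar = ∑ i,
      Real.sqrt (restrictTrace B (V i) / restrictTrace B⁻¹ (V i)) • projMatrix (V i)) :
    Sstar.PosDef ∧ IsAligned Sstar A ∧
      (1 / 2) * (Sstar⁻¹ * B + B⁻¹ * Sstar).trace - d = misalignment A B := by
  obtain rfl : V = fun i => eigSp A (μ i) := funext hV
  beta_reduce at hne hsup hSstar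
  have hVorth : OrthogonalFamily ℝ (fun i => eigSp A (μ i)) fun i => (eigSp A (μ i)).subtypeₗᵢ :=
    (Matrix.isSymmetric_toEuclideanLin_iff.2 hA.isHermitian).orthogonalFamily_eigenspaces.comp hμ
  have hb : ∀ i, 0 < restrictTrace B (eigSp A (μ i)) := fun i => restrictTrace_pos hB (hne i)
  have hc : ∀ i, 0 < restrictTrace B⁻¹ (eigSp A (μ i)) := fun i => restrictTrace_pos hB.inv (hne i)
  have hlam : ∀ i, 0 < √(restrictTrace B (eigSp A (μ i)) / restrictTrace B⁻¹ (eigSp A (μ i))) :=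
    fun i => Real.sqrt_pos.2 (div_pos (hb i) (hc i))
  have hpd : Sstar.PosDef := hSstar ▸ posDef_sum_smul_projMatrix hVorth hsup hlam
  have halign : IsAligned Sstar A := isAligned_of_iSup_eigSp_eq_top hsup fun i =>
    ⟨_, fun v hv => Module.End.mem_eigenspace_iff.2 <|
      hSstar ▸ toEuclideanLin_sum_smul_projMatrix_apply_of_mem hVorth _ hv⟩
  refine ⟨hpd, halign, ?_⟩
  refine (IsLeast.csInf_eq ⟨⟨Sstar, hpd, halign, rfl⟩, ?_⟩ : misalignment A B = _).symm
  rintro _ ⟨S, hS, hSA, rfl⟩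
  obtain ⟨κ, hκ, rfl⟩ := exists_pos_eq_sum_smul_projMatrix hVorth hsup hne hS fun i => hSA (μ i)
  rw [hSstar, trace_inv_mul_add_inv_mul_sum_smul_projMatrix hVorth hsup B fun i => (hlam i).ne',
    trace_inv_mul_add_inv_mul_sum_smul_projMatrix hVorth hsup B fun i => (hκ i).ne']
  gcongr 1 / 2 * ∑ i, ?_ - _ with i
  exact sqrt_div_inv_mul_add_mul_le (hb i) (hc i) (hκ i)
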